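/- arXiv:1601.04781 — 2 statements merged into one kernel-verified Lean document; each statement's English description precedes it below -/
import Mathlib

section
/- Let H be an inner product space and let W₁, W₂ ⊆ H be subspaces that are mutually orthogonal (⟨w₁, w₂⟩ = 0 for all w₁ ∈ W₁, w₂ ∈ W₂). If the subspace W₁ + W₂ is closed in H, then W₁ and W₂ are each closed in H. -/
private lemma aux_14 {H : Type*} [NormedAddCommGroup H] [InnerProductSpace ℂ H]
    (W₁ W₂ : Submodule ℂ H)
    (horth : ∀ w₁ ∈ W₁, ∀ w₂ ∈ W₂, (inner ℂ w₁ w₂ : ℂ) = 0)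
    (hclosed : IsClosed ((W₁ ⊔ W₂ : Submodule ℂ H) : Set H)) :
    IsClosed (W₁ : Set H) := by
  have hset : (W₁ : Set H) = ((W₁ ⊔ W₂ : Submodule ℂ H) : Set H) ∩ (W₂ᗮ : Set H) := by
    ext x
    constructor
    · intro hx
      refine ⟨Submodule.mem_sup_left hx, ?_⟩
      intro u hu
      rw [← inner_conj_symm, horth x hx u hu, map_zero]
    · rintro ⟨hx, hperp⟩
      obtain ⟨a, ha, b, hb, rfl⟩ := Submodule.mem_sup.mp hx
      have h1 : (inner ℂ b (a + b) : ℂ) = 0 := hperp b hb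
      have h2 : (inner ℂ b a : ℂ) = 0 := by
        rw [← inner_conj_symm, horth a ha b hb, map_zero]
      rw [inner_add_right, h2, zero_add] at h1
      have hb0 : b = 0 := inner_self_eq_zero.mp h1
      simpa [hb0] using ha
  rw [hset]
  exact hclosed.inter (Submodule.isClosed_orthogonal W₂)

/-- In an inner product space, if `W₁ ⊥ W₂` are mutually orthogonal
subspaces and `W₁ + W₂` is closed, then `W₁` and `W₂` are each closed. -/
theorem stmt_14 {H : Type*} [NormedAddCommGroup H] [InnerProductSpace ℂ H]
    (W₁ W₂ : Submodule ℂ H)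
    (horth : ∀ w₁ ∈ W₁, ∀ w₂ ∈ W₂, (inner ℂ w₁ w₂ : ℂ) = 0)
    (hclosed : IsClosed ((W₁ ⊔ W₂ : Submodule ℂ H) : Set H)) :
    IsClosed (W₁ : Set H) ∧ IsClosed (W₂ : Set H) := by
  refine ⟨aux_14 W₁ W₂ horth hclosed, aux_14 W₂ W₁ ?_ (by rwa [sup_comm])⟩
  intro w₂ hw₂ w₁ hw₁
  rw [← inner_conj_symm, horth w₁ hw₁ w₂ hw₂, map_zero]
end

section
/- Let H be a Hilbert space, A, B : H → H bounded self-adjoint nonnegative operators of the form A = D* D + D D* and B = E* E + E E* for bounded operators D, E, and let P be the orthogonal projection onto ker B. Suppose ker A and ker B are closed and ker A + ker B = H. Then there exists ε ∈ (0, 1) such that for all u ∈ H: ‖P D u‖² + ‖P D* u‖² ≥ (1 − ε)(‖D u‖² + ‖D* u‖²). -/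
open ContinuousLinearMap
open scoped InnerProductSpace

/-- Let `A = D* D + D D*`, `B = E* E + E E*` (bounded self-adjoint
nonnegative), and let `P` be the orthogonal projection onto `ker B`. If
`ker A + ker B = H`, then there is `ε ∈ (0,1)` with
`‖P D u‖² + ‖P D* u‖² ≥ (1-ε)(‖D u‖² + ‖D* u‖²)` for all `u`. -/
theorem stmt_16 {H : Type*} [NormedAddCommGroup H] [InnerProductSpace ℂ H] [CompleteSpace H]
    (D E A B P : H →L[ℂ] H)
    (hA : A = ContinuousLinearMap.adjoint D ∘L D + D ∘L ContinuousLinearMap.adjoint D)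
    (hB : B = ContinuousLinearMap.adjoint E ∘L E + E ∘L ContinuousLinearMap.adjoint E)
    (hP : IsSelfAdjoint P) (hP2 : P ∘L P = P)
    (hPrange : LinearMap.range (P : H →ₗ[ℂ] H) = LinearMap.ker (B : H →ₗ[ℂ] H))
    (hsum : LinearMap.ker (A : H →ₗ[ℂ] H) ⊔ LinearMap.ker (B : H →ₗ[ℂ] H) = ⊤) :
    ∃ ε : ℝ, 0 < ε ∧ ε < 1 ∧ ∀ u : H,
      (1 - ε) * (‖D u‖ ^ 2 + ‖ContinuousLinearMap.adjoint D u‖ ^ 2)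
        ≤ ‖P (D u)‖ ^ 2 + ‖P (ContinuousLinearMap.adjoint D u)‖ ^ 2 := by
  classical
  set D' := ContinuousLinearMap.adjoint D with hD'
  set M := LinearMap.ker (A : H →ₗ[ℂ] H) with hM
  set K := LinearMap.ker (B : H →ₗ[ℂ] H) with hK
  -- elements of ker A are killed by both D and D'
  have hker : ∀ v : H, v ∈ M → D v = 0 ∧ D' v = 0 := by
    intro v hv
    have hAv : A v = 0 := hv
    have h0 : (0 : ℝ) = RCLike.re (⟪A v, v⟫_ℂ) := by rw [hAv, inner_zero_left]; simp
    have hsplit : RCLike.re (⟪A v, v⟫_ℂ) = ‖D v‖ ^ 2 + ‖D' v‖ ^ 2 := by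
      rw [hA]
      have h1 : ⟪(ContinuousLinearMap.adjoint D ∘L D + D ∘L ContinuousLinearMap.adjoint D) v, v⟫_ℂ
          = ⟪D v, D v⟫_ℂ + ⟪D' v, D' v⟫_ℂ := by
        rw [ContinuousLinearMap.add_apply, inner_add_left, ContinuousLinearMap.comp_apply,
          ContinuousLinearMap.comp_apply, ContinuousLinearMap.adjoint_inner_left]
        congr 1
        exact (ContinuousLinearMap.adjoint_inner_right D (D' v) v).symm
      rw [h1, map_add, inner_self_eq_norm_sq, inner_self_eq_norm_sq]
    have h2 : ‖D v‖ ^ 2 + ‖D' v‖ ^ 2 = 0 := by rw [← hsplit, ← h0]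
    constructor
    · have : ‖D v‖ = 0 := by nlinarith [sq_nonneg ‖D v‖, sq_nonneg ‖D' v‖, norm_nonneg (D v), norm_nonneg (D' v)]
      simpa using this
    · have : ‖D' v‖ = 0 := by nlinarith [sq_nonneg ‖D v‖, sq_nonneg ‖D' v‖, norm_nonneg (D v), norm_nonneg (D' v)]
      simpa using this
  -- D u and D' u are orthogonal to ker A
  have horthD : ∀ u : H, ∀ v ∈ M, ⟪D u, v⟫_ℂ = 0 := by
    intro u v hv
    have : ⟪D u, v⟫_ℂ = ⟪u, D' v⟫_ℂ := (ContinuousLinearMap.adjoint_inner_right D u v).symm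
    rw [this, (hker v hv).2, inner_zero_right]
  have horthD' : ∀ u : H, ∀ v ∈ M, ⟪D' u, v⟫_ℂ = 0 := by
    intro u v hv
    have : ⟪D' u, v⟫_ℂ = ⟪u, D v⟫_ℂ := ContinuousLinearMap.adjoint_inner_left D v u
    rw [this, (hker v hv).1, inner_zero_right]
  -- open mapping: quantitative decomposition
  haveI : CompleteSpace M := A.isClosed_ker.completeSpace_coe
  haveI : CompleteSpace K := B.isClosed_ker.completeSpace_coe
  let T : (M × K) →L[ℂ] H := (M.subtypeL).coprod (K.subtypeL)
  have hTsurj : Function.Surjective T := by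
    intro h
    have hh : h ∈ M ⊔ K := by rw [hsum]; trivial
    obtain ⟨m, hm, k, hk, hmk⟩ := Submodule.mem_sup.mp hh
    exact ⟨(⟨m, hm⟩, ⟨k, hk⟩), hmk⟩
  obtain ⟨C, hC0, hCp⟩ := T.exists_preimage_norm_le hTsurj
  -- key quantitative injectivity of P on M-perp
  have key : ∀ w : H, (∀ v ∈ M, ⟪w, v⟫_ℂ = 0) → ‖w‖ ≤ C * ‖P w‖ := by
    intro w hw
    obtain ⟨⟨m, k⟩, hTx, hxnorm⟩ := hCp w
    have hwsum : (m : H) + (k : H) = w := hTx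
    have hknorm : ‖(k : H)‖ ≤ C * ‖w‖ := le_trans (norm_snd_le (m, k)) hxnorm
    have hPk : P (k : H) = (k : H) := by
      have : (k : H) ∈ LinearMap.range (P : H →ₗ[ℂ] H) := by rw [hPrange]; exact k.2
      obtain ⟨x, hx⟩ := this
      replace hx : P x = (k : H) := hx
      calc P (k : H) = P (P x) := by rw [hx]
        _ = (P ∘L P) x := rfl
        _ = P x := by rw [hP2]
        _ = (k : H) := hx
    have hinner : (‖w‖ ^ 2 : ℝ) = RCLike.re (⟪P w, (k : H)⟫_ℂ) := by
      have e1 : ⟪w, w⟫_ℂ = ⟪w, (m : H)⟫_ℂ + ⟪w, (k : H)⟫_ℂ := by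
        rw [← inner_add_right, hwsum]
      have e2 : ⟪w, (m : H)⟫_ℂ = 0 := hw m m.2
      have e3 : ⟪w, (k : H)⟫_ℂ = ⟪P w, (k : H)⟫_ℂ := by
        conv_lhs => rw [← hPk]
        rw [← ContinuousLinearMap.adjoint_inner_left P (k : H) w,
          ContinuousLinearMap.isSelfAdjoint_iff'.mp hP]
      have : ⟪w, w⟫_ℂ = ⟪P w, (k : H)⟫_ℂ := by rw [e1, e2, zero_add, e3]
      have h4 := congrArg RCLike.re this
      rwa [inner_self_eq_norm_sq] at h4
    have hbound : RCLike.re (⟪P w, (k : H)⟫_ℂ) ≤ ‖P w‖ * ‖(k : H)‖ := by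
      calc RCLike.re (⟪P w, (k : H)⟫_ℂ) ≤ ‖⟪P w, (k : H)⟫_ℂ‖ := RCLike.re_le_norm _
        _ ≤ ‖P w‖ * ‖(k : H)‖ := norm_inner_le_norm _ _
    have h5 : ‖w‖ ^ 2 ≤ ‖P w‖ * (C * ‖w‖) := by
      calc (‖w‖ ^ 2 : ℝ) = RCLike.re (⟪P w, (k : H)⟫_ℂ) := hinner
        _ ≤ ‖P w‖ * ‖(k : H)‖ := hbound
        _ ≤ ‖P w‖ * (C * ‖w‖) := by
            exact mul_le_mul_of_nonneg_left hknorm (norm_nonneg _)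
    rcases eq_or_lt_of_le (norm_nonneg w) with h | h
    · rw [← h]; positivity
    · nlinarith [norm_nonneg (P w)]
  -- conclude
  set C0 : ℝ := C + 1 with hC0def
  have hC01 : 1 < C0 := by simp [hC0def]; linarith
  have hC0pos : 0 < C0 := by linarith
  refine ⟨1 - 1 / C0 ^ 2, ?_, ?_, ?_⟩
  · have : 1 / C0 ^ 2 < 1 := by
      rw [div_lt_one (by positivity)]
      nlinarith
    linarith
  · have : 0 < 1 / C0 ^ 2 := by positivity
    linarith
  · intro u
    have hDu : ‖D u‖ ≤ C0 * ‖P (D u)‖ := by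
      have := key (D u) (horthD u)
      nlinarith [norm_nonneg (P (D u))]
    have hD'u : ‖D' u‖ ≤ C0 * ‖P (D' u)‖ := by
      have := key (D' u) (horthD' u)
      nlinarith [norm_nonneg (P (D' u))]
    have h1 : ‖D u‖ ^ 2 ≤ C0 ^ 2 * ‖P (D u)‖ ^ 2 := by nlinarith [norm_nonneg (D u), norm_nonneg (P (D u))]
    have h2 : ‖D' u‖ ^ 2 ≤ C0 ^ 2 * ‖P (D' u)‖ ^ 2 := by nlinarith [norm_nonneg (D' u), norm_nonneg (P (D' u))]
    have hsub : (1 : ℝ) - (1 - 1 / C0 ^ 2) = 1 / C0 ^ 2 := by ring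
    rw [hsub]
    rw [div_mul_eq_mul_div, one_mul, div_le_iff₀ (by positivity)]
    nlinarith [norm_nonneg (P (D u)), norm_nonneg (P (D' u))]
end
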